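/- arXiv:1312.6843 — 2 statements merged into one kernel-verified Lean document; each statement's English description precedes it below -/
import Mathlib

section
/- Let Q and R be probability measures on a measurable space with an increasing sequence of σ-fields F_k generating F, such that R restricted to F_k is absolutely continuous with respect to Q restricted to F_k with Radon–Nikodym derivative f_k. Then Q and R are mutually singular if and only if f_k → 0 Q-almost surely. -/
/-!
Put `P = Q + R`. The densities `dQ_k/dP_k` and `dR_k/dP_k` are the conditional expectations of
`dQ/dP` and `dR/dP` given `F_k`, so by Lévy's upward theorem they converge `P`-a.e. to `dQ/dP` and
`dR/dP`. Their ratio, which is `f_k`, therefore converges `Q`-a.e. to `dR/dQ`, and `dR/dQ`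
vanishes `Q`-a.e. exactly when `Q ⟂ R`.
-/

open MeasureTheory Filter Topology
open scoped ENNReal

namespace MeasureTheory

variable {Ω : Type*} {mΩ : MeasurableSpace Ω}

theorem toReal_rnDeriv_ae_eq_of_eq_ofReal_setIntegral {μ ν : Measure Ω} [SigmaFinite ν] {g : Ω → ℝ}
    (hg_nonneg : 0 ≤ᵐ[ν] g) (hg_int : Integrable g ν)
    (h : ∀ s, MeasurableSet s → μ s = ENNReal.ofReal (∫ x in s, g x ∂ν)) :
    (fun x ↦ (μ.rnDeriv ν x).toReal) =ᵐ[ν] g := by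
  have hμ : μ = ν.withDensity (fun x ↦ ENNReal.ofReal (g x)) := Measure.ext fun s hs ↦ by
    rw [h s hs, withDensity_apply _ hs, ofReal_integral_eq_lintegral_ofReal hg_int.integrableOn
      (ae_restrict_of_ae hg_nonneg)]
  filter_upwards [hμ ▸ Measure.rnDeriv_withDensity₀ ν hg_int.aemeasurable.ennreal_ofReal,
    hg_nonneg] with x hx hx_nonneg
  rw [hx, ENNReal.toReal_ofReal hx_nonneg]

variable (ℱ : Filtration ℕ mΩ)

theorem ae_tendsto_toReal_rnDeriv_trim_of_absolutelyContinuous (hℱ : ⨆ n, ℱ n = mΩ)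
    {μ ν : Measure Ω} [IsFiniteMeasure μ] [IsFiniteMeasure ν] (hμν : μ ≪ ν) :
    ∀ᵐ x ∂ν, Tendsto (fun n ↦ ((μ.trim (ℱ.le n)).rnDeriv (ν.trim (ℱ.le n)) x).toReal) atTop
      (𝓝 (μ.rnDeriv ν x).toReal) := by
  have h_condExp : ∀ᵐ x ∂ν, ∀ n, ((μ.trim (ℱ.le n)).rnDeriv (ν.trim (ℱ.le n)) x).toReal
      = ν[fun x ↦ (μ.rnDeriv ν x).toReal | ℱ n] x :=
    ae_all_iff.2 fun n ↦ ae_of_ae_trim (ℱ.le n) (toReal_rnDeriv_trim (ℱ.le n) hμν)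
  have h_levy := Measure.integrable_toReal_rnDeriv.tendsto_ae_condExp (ℱ := ℱ)
    (by rw [hℱ]; exact (Measure.measurable_rnDeriv μ ν).ennreal_toReal.stronglyMeasurable)
  filter_upwards [h_condExp, h_levy] with x hx hx_levy
  simpa only [hx] using hx_levy

theorem ae_tendsto_toReal_rnDeriv_trim (hℱ : ⨆ n, ℱ n = mΩ) (μ ν : Measure Ω)
    [IsFiniteMeasure μ] [IsFiniteMeasure ν] :
    ∀ᵐ x ∂ν, Tendsto (fun n ↦ ((μ.trim (ℱ.le n)).rnDeriv (ν.trim (ℱ.le n)) x).toReal) atTop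
      (𝓝 (μ.rnDeriv ν x).toReal) := by
  have hμ : μ ≪ μ + ν := Measure.AbsolutelyContinuous.rfl.add_right ν
  have hν : ν ≪ μ + ν := Measure.AbsolutelyContinuous.rfl.add_right' μ
  have h_ratio : ∀ᵐ x ∂ν, ∀ n, ((μ.trim (ℱ.le n)).rnDeriv (ν.trim (ℱ.le n)) x).toReal
      = ((μ.trim (ℱ.le n)).rnDeriv ((μ + ν).trim (ℱ.le n)) x).toReal
        / ((ν.trim (ℱ.le n)).rnDeriv ((μ + ν).trim (ℱ.le n)) x).toReal := by
    refine ae_all_iff.2 fun n ↦ ae_of_ae_trim (ℱ.le n) ?_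
    filter_upwards [Measure.rnDeriv_eq_div (hμ.trim (ℱ.le n)) (hν.trim (ℱ.le n))] with x hx
    rw [hx, ENNReal.toReal_div]
  have h_pos : ∀ᵐ x ∂ν, 0 < (ν.rnDeriv (μ + ν) x).toReal := by
    filter_upwards [Measure.rnDeriv_pos hν, hν.ae_le (Measure.rnDeriv_lt_top ν (μ + ν))]
      with x hx_pos hx_top
    exact ENNReal.toReal_pos hx_pos.ne' hx_top.ne
  filter_upwards [h_ratio, Measure.rnDeriv_eq_div hμ hν, h_pos,
    hν.ae_le (ae_tendsto_toReal_rnDeriv_trim_of_absolutelyContinuous ℱ hℱ hμ),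
    hν.ae_le (ae_tendsto_toReal_rnDeriv_trim_of_absolutelyContinuous ℱ hℱ hν)]
    with x hx_ratio hx_div hx_pos hx_μ hx_ν
  rw [hx_div, ENNReal.toReal_div]
  simp only [hx_ratio]
  exact hx_μ.div hx_ν hx_pos.ne'

end MeasureTheory

theorem mutuallySingular_iff_rnDeriv_tendsto_zero
    {Ω : Type*} {mΩ : MeasurableSpace Ω}
    (F : ℕ → MeasurableSpace Ω) (hle : ∀ k, F k ≤ mΩ) (hmono : Monotone F)
    (hgen : mΩ = ⨆ k, F k)
    (Q R : Measure Ω) [IsProbabilityMeasure Q] [IsProbabilityMeasure R]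
    (f : ℕ → Ω → ℝ)
    (hf_nonneg : ∀ k x, 0 ≤ f k x)
    (hf_meas : ∀ k, Measurable[F k] (f k))
    (hf_int : ∀ k, Integrable (f k) Q)
    (hRN : ∀ k, ∀ s : Set Ω, MeasurableSet[F k] s →
      R s = ENNReal.ofReal (∫ x in s, f k x ∂Q)) :
    Q.MutuallySingular R ↔
      ∀ᵐ x ∂Q, Tendsto (fun k => f k x) atTop (nhds 0) := by
  have hf_rnDeriv : ∀ k, ∀ᵐ x ∂Q, ((R.trim (hle k)).rnDeriv (Q.trim (hle k)) x).toReal = f k x :=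
    fun k ↦ ae_of_ae_trim (hle k) <| toReal_rnDeriv_ae_eq_of_eq_ofReal_setIntegral
      (ae_of_all _ (hf_nonneg k)) ((hf_int k).trim (hle k) (hf_meas k).stronglyMeasurable)
      fun s hs ↦ by
        rw [trim_measurableSet_eq (hle k) hs, ← setIntegral_trim (hle k)
          (hf_meas k).stronglyMeasurable hs, hRN k s hs]
  have h_lim : ∀ᵐ x ∂Q, Tendsto (fun k ↦ f k x) atTop (𝓝 (R.rnDeriv Q x).toReal) := by
    filter_upwards [ae_all_iff.2 hf_rnDeriv,
      ae_tendsto_toReal_rnDeriv_trim ⟨F, hmono, hle⟩ hgen.symm R Q] with x hx hx_lim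
    simpa only [hx] using hx_lim
  rw [Measure.MutuallySingular.comm, ← Measure.rnDeriv_eq_zero]
  constructor
  · intro h_zero
    filter_upwards [h_lim, h_zero] with x hx hx_zero
    simpa [hx_zero] using hx
  · intro h_tendsto
    filter_upwards [h_lim, h_tendsto, Measure.rnDeriv_lt_top R Q] with x hx hx_zero hx_top
    have h_toReal_zero := tendsto_nhds_unique hx hx_zero
    simpa [ENNReal.toReal_eq_zero_iff, hx_top.ne] using h_toReal_zero
end

section
/- There exists a random vector (Y¹, Y², ξ¹, ξ²) such that Y¹ and Y² are each uniform on {-1,1}, ξ¹ and ξ² are each standard Gaussian, Y¹ is independent of ξ¹, Y² is independent of ξ², Y¹+ξ¹ = Y²+ξ² almost surely, and P(Y¹ = Y²) < 1. -/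
open MeasureTheory ProbabilityTheory
open scoped ENNReal

open Set

/-!
The Gaussian density is at least φ(2) on (-2, 2), so N(0,1) is the sum of the sub-probability
measures p/4 · Leb|(-2,2) and (1 - p) · law(W), with p = 4 φ(2); and p/4 · Leb|(-2,2) is the law
of Z + U on the branch I = 1, since a Rademacher sign plus an independent uniform on (-1, 1) is
uniform on (-2, 2). Hence on either branch the pair (Y¹, ξ¹) is a Rademacher sign independent of
the corresponding part of N(0,1), and summing the branches gives Rademacher ⊗ N(0,1), i.e. the
marginals and independence at once. Swapping (Y¹, ξ¹) with (Y², ξ²) leaves the law invariant,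
both sums equal Z₁ + Z₂ + U resp. Z₃ + W, and Y¹ ≠ Y² with probability p/2 > 0.
-/

theorem Real.volume_restrict_Ioo_add_volume_restrict_Ioo {a b c : ℝ} (hab : a ≤ b) (hbc : b < c) :
    volume.restrict (Ioo a b) + volume.restrict (Ioo b c) = volume.restrict (Ioo a c) := by
  rw [Measure.restrict_congr_set Ioo_ae_eq_Ioc,
    ← Measure.restrict_union (Ioc_disjoint_Ioi_same.mono_right Ioo_subset_Ioi_self)
      measurableSet_Ioo, Ioc_union_Ioo_eq_Ioo hab hbc]

theorem Real.map_const_add_volume_restrict_Ioo (c a b : ℝ) :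
    (volume.restrict (Ioo a b)).map (c + ·) = volume.restrict (Ioo (c + a) (c + b)) := by
  have h : Ioo a b = (c + ·) ⁻¹' Ioo (c + a) (c + b) := by simp [preimage_const_add_Ioo]
  rw [h, ← (measurableEmbedding_addLeft c).restrict_map, map_add_left_eq_self]

theorem MeasureTheory.withDensity_ofReal_eq_smul_restrict_add {α : Type*} [MeasurableSpace α]
    (μ : Measure α) {f : α → ℝ} {s : Set α} (hs : MeasurableSet s) {c : ℝ} (hc : 0 ≤ c)
    (hf : ∀ x ∈ s, c ≤ f x) :
    μ.withDensity (fun x ↦ ENNReal.ofReal (f x)) = ENNReal.ofReal c • μ.restrict s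
      + μ.withDensity (fun x ↦ ENNReal.ofReal (f x - s.indicator (fun _ ↦ c) x)) := by
  rw [← withDensity_const, ← withDensity_indicator hs,
    ← withDensity_add_left (measurable_const.indicator hs)]
  congr 1 with x
  by_cases hx : x ∈ s
  · simp [hx, ← ENNReal.ofReal_add hc (sub_nonneg.2 (hf x hx))]
  · simp [hx]

theorem ProbabilityTheory.gaussianPDFReal_le_of_abs_sub_le {μ : ℝ} {v : NNReal} {x y : ℝ}
    (h : |y - μ| ≤ |x - μ|) : gaussianPDFReal μ v x ≤ gaussianPDFReal μ v y := by
  rw [gaussianPDFReal, gaussianPDFReal]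
  gcongr _ * Real.exp (-?_ / _)
  exact sq_le_sq.2 h

theorem ProbabilityTheory.map_eq_and_indepFun_of_map_prod_eq {Ω α β : Type*} [MeasurableSpace Ω]
    [MeasurableSpace α] [MeasurableSpace β] {μ : Measure Ω} [IsProbabilityMeasure μ]
    {X : Ω → α} {Y : Ω → β} (hX : Measurable X) (hY : Measurable Y)
    {ρ : Measure α} {ν : Measure β} [IsProbabilityMeasure ρ] [IsProbabilityMeasure ν]
    (h : μ.map (fun ω ↦ (X ω, Y ω)) = ρ.prod ν) :
    μ.map X = ρ ∧ μ.map Y = ν ∧ IndepFun X Y μ := by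
  have hX' : μ.map X = ρ := by
    have h₁ := congrArg (Measure.map Prod.fst) h
    rwa [Measure.map_map measurable_fst (hX.prodMk hY), Measure.map_fst_prod, measure_univ,
      one_smul] at h₁
  have hY' : μ.map Y = ν := by
    have h₂ := congrArg (Measure.map Prod.snd) h
    rwa [Measure.map_map measurable_snd (hX.prodMk hY), Measure.map_snd_prod, measure_univ,
      one_smul] at h₂
  refine ⟨hX', hY', ?_⟩
  rw [indepFun_iff_map_prod_eq_prod_map_map hX.aemeasurable hY.aemeasurable, h, hX', hY']

namespace ProbabilityTheory

noncomputable def rademacher : Measure ℝ :=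
  (2⁻¹ : ℝ≥0∞) • Measure.dirac 1 + (2⁻¹ : ℝ≥0∞) • Measure.dirac (-1)

instance : IsProbabilityMeasure rademacher :=
  ⟨by simp [rademacher, ENNReal.inv_two_add_inv_two]⟩

theorem rademacher_conv_volume_restrict_Ioo :
    rademacher ∗ volume.restrict (Ioo (-1) 1) = (2⁻¹ : ℝ≥0∞) • volume.restrict (Ioo (-2) 2) := by
  rw [rademacher, Measure.add_conv, Measure.conv_smul_left, Measure.conv_smul_left,
    Measure.dirac_conv, Measure.dirac_conv, Real.map_const_add_volume_restrict_Ioo,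
    Real.map_const_add_volume_restrict_Ioo, ← smul_add, add_comm]
  norm_num [Real.volume_restrict_Ioo_add_volume_restrict_Ioo]

end ProbabilityTheory

namespace RademacherGaussianCoupling

-- With p = 4 φ(2), these are the measures p/4 · 𝟙_{(-2,2)} dx and (1 - p) f dx of the splitting
-- of φ, and `uniformPart` is p times the law of U.
noncomputable def gaussianCore : Measure ℝ :=
  ENNReal.ofReal (gaussianPDFReal 0 1 2) • volume.restrict (Ioo (-2) 2)

noncomputable def gaussianRemainder : Measure ℝ :=
  volume.withDensity fun x ↦ ENNReal.ofReal
    (gaussianPDFReal 0 1 x - (Ioo (-2) 2).indicator (fun _ ↦ gaussianPDFReal 0 1 2) x)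

noncomputable def uniformPart : Measure ℝ :=
  (2 * ENNReal.ofReal (gaussianPDFReal 0 1 2)) • volume.restrict (Ioo (-1) 1)

instance : SFinite gaussianCore := by unfold gaussianCore; infer_instance
instance : SFinite uniformPart := by unfold uniformPart; infer_instance
instance : SFinite gaussianRemainder := by unfold gaussianRemainder; infer_instance

theorem gaussianCore_add_gaussianRemainder :
    gaussianCore + gaussianRemainder = gaussianReal 0 1 := by
  rw [gaussianReal_of_var_ne_zero 0 one_ne_zero, gaussianCore, gaussianRemainder]
  refine (withDensity_ofReal_eq_smul_restrict_add _ measurableSet_Ioo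
    (gaussianPDFReal_nonneg 0 1 2) fun x hx ↦ gaussianPDFReal_le_of_abs_sub_le ?_).symm
  rw [sub_zero, sub_zero, abs_two]
  exact (abs_lt.2 hx).le

theorem rademacher_conv_uniformPart : rademacher ∗ uniformPart = gaussianCore := by
  rw [uniformPart, Measure.conv_smul_right, rademacher_conv_volume_restrict_Ioo, smul_smul,
    mul_right_comm, ENNReal.mul_inv_cancel two_ne_zero ENNReal.ofNat_ne_top, one_mul,
    gaussianCore]

def pairedShift (x : (ℝ × ℝ) × ℝ) : ℝ × ℝ × ℝ × ℝ := (x.1.1, x.1.2, x.1.2 + x.2, x.1.1 + x.2)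

def diagonalPair (x : ℝ × ℝ) : ℝ × ℝ × ℝ × ℝ := (x.1, x.1, x.2, x.2)

-- The two summands are the branches I = 1 and I = 0, of masses p and 1 - p.
noncomputable def coupling : Measure (ℝ × ℝ × ℝ × ℝ) :=
  ((rademacher.prod rademacher).prod uniformPart).map pairedShift
    + (rademacher.prod gaussianRemainder).map diagonalPair

theorem measurable_pairedShift : Measurable pairedShift := by unfold pairedShift; fun_prop
theorem measurable_diagonalPair : Measurable diagonalPair := by unfold diagonalPair; fun_prop

theorem coupling_map_first_pair :
    coupling.map (fun ω ↦ (ω.1, ω.2.2.1)) = rademacher.prod (gaussianReal 0 1) := by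
  have hπ : Measurable fun ω : ℝ × ℝ × ℝ × ℝ ↦ (ω.1, ω.2.2.1) := by fun_prop
  rw [coupling, Measure.map_add _ _ hπ, Measure.map_map hπ measurable_pairedShift,
    Measure.map_map hπ measurable_diagonalPair]
  have hT : (fun ω : ℝ × ℝ × ℝ × ℝ ↦ (ω.1, ω.2.2.1)) ∘ pairedShift
      = Prod.map id (fun y : ℝ × ℝ ↦ y.1 + y.2) ∘ MeasurableEquiv.prodAssoc := rfl
  have hS : (fun ω : ℝ × ℝ × ℝ × ℝ ↦ (ω.1, ω.2.2.1)) ∘ diagonalPair = id := rfl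
  rw [hT, hS, Measure.map_id, ← Measure.map_map (by fun_prop) (by fun_prop),
    Measure.prodAssoc_prod, ← Measure.map_prod_map _ _ measurable_id (by fun_prop), Measure.map_id,
    ← Measure.conv, rademacher_conv_uniformPart, ← Measure.prod_add,
    gaussianCore_add_gaussianRemainder]

def swapPairs (ω : ℝ × ℝ × ℝ × ℝ) : ℝ × ℝ × ℝ × ℝ := (ω.2.1, ω.1, ω.2.2.2, ω.2.2.1)

theorem measurable_swapPairs : Measurable swapPairs := by unfold swapPairs; fun_prop

theorem coupling_map_swapPairs : coupling.map swapPairs = coupling := by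
  rw [coupling, Measure.map_add _ _ measurable_swapPairs,
    Measure.map_map measurable_swapPairs measurable_pairedShift,
    Measure.map_map measurable_swapPairs measurable_diagonalPair]
  have hT : swapPairs ∘ pairedShift = pairedShift ∘ Prod.map Prod.swap id := rfl
  have hS : swapPairs ∘ diagonalPair = diagonalPair := rfl
  rw [hT, hS, ← Measure.map_map measurable_pairedShift (by fun_prop),
    ← Measure.map_prod_map _ _ measurable_swap measurable_id, Measure.prod_swap, Measure.map_id]

theorem coupling_map_second_pair :
    coupling.map (fun ω ↦ (ω.2.1, ω.2.2.2)) = rademacher.prod (gaussianReal 0 1) := by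
  conv_lhs => rw [← coupling_map_swapPairs, Measure.map_map (by fun_prop) measurable_swapPairs]
  exact coupling_map_first_pair

instance : IsProbabilityMeasure coupling :=
  have : IsProbabilityMeasure (coupling.map fun ω ↦ (ω.1, ω.2.2.1)) := by
    rw [coupling_map_first_pair]; infer_instance
  Measure.isProbabilityMeasure_of_map fun ω ↦ (ω.1, ω.2.2.1)

theorem ae_coupling_sums_eq : ∀ᵐ ω ∂coupling, ω.1 + ω.2.2.1 = ω.2.1 + ω.2.2.2 := by
  have hp : MeasurableSet {ω : ℝ × ℝ × ℝ × ℝ | ω.1 + ω.2.2.1 = ω.2.1 + ω.2.2.2} :=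
    measurableSet_eq_fun (by fun_prop) (by fun_prop)
  rw [coupling, ae_add_measure_iff, ae_map_iff measurable_pairedShift.aemeasurable hp,
    ae_map_iff measurable_diagonalPair.aemeasurable hp]
  exact ⟨.of_forall fun _ ↦ add_left_comm _ _ _, .of_forall fun _ ↦ rfl⟩

theorem coupling_fst_eq_snd_lt_one : coupling {ω | ω.1 = ω.2.1} < 1 := by
  set E := {ω : ℝ × ℝ × ℝ × ℝ | ω.1 = ω.2.1}
  have hE : MeasurableSet E := measurableSet_eq_fun (by fun_prop) (by fun_prop)
  rw [← compl_compl E, prob_compl_eq_one_sub hE.compl]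
  refine ENNReal.sub_lt_self ENNReal.one_ne_top one_ne_zero (ne_of_gt ?_)
  have hsub : ({1} ×ˢ {-1}) ×ˢ univ ⊆ pairedShift ⁻¹' Eᶜ := by
    rintro ⟨⟨a, b⟩, u⟩ ⟨⟨rfl, rfl⟩, -⟩
    norm_num [E, pairedShift]
  calc 0 < rademacher {1} * rademacher {-1} * uniformPart univ := by
        have := gaussianPDFReal_pos 0 1 2 one_ne_zero
        simp [rademacher, uniformPart, this]
    _ = ((rademacher.prod rademacher).prod uniformPart) (({1} ×ˢ {-1}) ×ˢ univ) := by
        rw [Measure.prod_prod, Measure.prod_prod]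
    _ ≤ coupling Eᶜ := by
        rw [coupling, Measure.add_apply, Measure.map_apply measurable_pairedShift hE.compl]
        exact (measure_mono hsub).trans le_self_add

end RademacherGaussianCoupling

theorem exists_coupling_rademacher_gaussian :
    ∃ (Ω : Type) (mΩ : MeasurableSpace Ω) (μ : Measure Ω)
      (Y₁ Y₂ ξ₁ ξ₂ : Ω → ℝ),
      IsProbabilityMeasure μ ∧
      Measurable Y₁ ∧ Measurable Y₂ ∧ Measurable ξ₁ ∧ Measurable ξ₂ ∧
      μ.map Y₁ = (2⁻¹ : ℝ≥0∞) • Measure.dirac (1 : ℝ)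
                  + (2⁻¹ : ℝ≥0∞) • Measure.dirac (-1 : ℝ) ∧
      μ.map Y₂ = (2⁻¹ : ℝ≥0∞) • Measure.dirac (1 : ℝ)
                  + (2⁻¹ : ℝ≥0∞) • Measure.dirac (-1 : ℝ) ∧
      μ.map ξ₁ = gaussianReal 0 1 ∧
      μ.map ξ₂ = gaussianReal 0 1 ∧
      IndepFun Y₁ ξ₁ μ ∧ IndepFun Y₂ ξ₂ μ ∧
      (∀ᵐ ω ∂μ, Y₁ ω + ξ₁ ω = Y₂ ω + ξ₂ ω) ∧
      μ {ω | Y₁ ω = Y₂ ω} < 1 := by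
  obtain ⟨hY₁, hξ₁, hindep₁⟩ := map_eq_and_indepFun_of_map_prod_eq (by fun_prop) (by fun_prop)
    RademacherGaussianCoupling.coupling_map_first_pair
  obtain ⟨hY₂, hξ₂, hindep₂⟩ := map_eq_and_indepFun_of_map_prod_eq (by fun_prop) (by fun_prop)
    RademacherGaussianCoupling.coupling_map_second_pair
  exact ⟨_, _, _, _, _, _, _, inferInstance, by fun_prop, by fun_prop, by fun_prop, by fun_prop,
    hY₁, hY₂, hξ₁, hξ₂, hindep₁, hindep₂, RademacherGaussianCoupling.ae_coupling_sums_eq,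
    RademacherGaussianCoupling.coupling_fst_eq_snd_lt_one⟩
end
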